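/- arXiv:2209.05640 — 4 statements merged into one kernel-verified Lean document; each statement's English description precedes it below -/
import Mathlib

section
/- Let p be an odd prime, τ = γ p^ν with ν ≥ 0, γ ≥ 1, gcd(γ,p)=1, and m = pτ. Let F be a field of characteristic 2, and let i be an integer with 1 ≤ i ≤ p^{ν+1} − 1. If s(x) ∈ F[x]/(x^m + 1) satisfies (1 + x^i) s(x) = 0 and the coefficients of s satisfy ∑_{v=0}^{p-1} s_{vτ+μ} = 0 for every μ with 0 ≤ μ ≤ τ−1, then s(x) = 0. -/
open Polynomial

/-- (n,k)-recoverability of GEBR codes when `k+r ≤ p^{ν+1}` (Theorem 1(i)).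
Let `p` be an odd prime, `τ = γ p^ν` with `gcd(γ,p) = 1`, `m = pτ`, `F` of char 2,
`1 ≤ i ≤ p^{ν+1} - 1`. If `s`, viewed in `F[x]/(x^m+1)` (i.e. of degree `< m`),
satisfies `(1 + x^i) s(x) = 0 mod (x^m + 1)` and
`∑_{v=0}^{p-1} s_{vτ+μ} = 0` for all `0 ≤ μ ≤ τ-1`, then `s = 0`. -/
theorem stmt6 (F : Type*) [Field F] [CharP F 2] (p ν γ : ℕ) (hp : Nat.Prime p)
    (hodd : Odd p) (hγ : 0 < γ) (hcop : Nat.Coprime γ p) (i : ℕ)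
    (hi1 : 1 ≤ i) (hi2 : i ≤ p ^ (ν + 1) - 1)
    (s : Polynomial F) (hdeg : s.natDegree < p * (γ * p ^ ν))
    (hann : ((X : Polynomial F) ^ (p * (γ * p ^ ν)) + 1) ∣ (1 + X ^ i) * s)
    (hpar : ∀ μ < γ * p ^ ν,
      ∑ v ∈ Finset.range p, s.coeff (v * (γ * p ^ ν) + μ) = 0) :
    s = 0 := by
  classical
  set τ : ℕ := γ * p ^ ν with hτdef
  set m : ℕ := p * τ with hmdef
  have h2 : (2 : F) = 0 := CharTwo.two_eq_zero
  have hppos : 0 < p := hp.pos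
  have hτpos : 0 < τ := Nat.mul_pos hγ (pow_pos hppos ν)
  have hmpos : 0 < m := Nat.mul_pos hppos hτpos
  have hpν1 : p ^ (ν + 1) ≤ m := by
    have : p ^ (ν + 1) = p * (1 * p ^ ν) := by ring
    rw [this, hmdef, hτdef]
    exact Nat.mul_le_mul_left p (Nat.mul_le_mul_right _ hγ)
  have him : i < m := lt_of_le_of_lt hi2 (lt_of_lt_of_le (Nat.sub_lt (pow_pos hppos _) one_pos) hpν1)
  have hsc : ∀ N, m ≤ N → s.coeff N = 0 := fun N hN =>
    coeff_eq_zero_of_natDegree_lt (lt_of_lt_of_le hdeg hN)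
  by_cases hs0 : s = 0
  · exact hs0
  obtain ⟨q, hq⟩ := hann
  -- degree bound on q
  have hXi_ne : (1 + X ^ i : F[X]) ≠ 0 := by
    have := X_pow_add_C_ne_zero (R := F) hi1 1
    simpa [add_comm, map_one] using this
  have hXm_ne : ((X : F[X]) ^ m + 1) ≠ 0 := by
    have := X_pow_add_C_ne_zero (R := F) hmpos 1
    simpa [map_one] using this
  have hq_ne : q ≠ 0 := by
    intro h
    rw [h, mul_zero] at hq
    exact (mul_ne_zero hXi_ne hs0) hq
  have hqdeg : q.natDegree < i := by
    have e1 : ((1 + X ^ i : F[X]) * s).natDegree = i + s.natDegree := by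
      rw [natDegree_mul hXi_ne hs0]
      congr 1
      have : (1 + X ^ i : F[X]) = X ^ i + C 1 := by rw [map_one, add_comm]
      rw [this, natDegree_X_pow_add_C]
    have e2 : (((X : F[X]) ^ m + 1) * q).natDegree = m + q.natDegree := by
      rw [natDegree_mul hXm_ne hq_ne]
      congr 1
      have : ((X : F[X]) ^ m + 1) = X ^ m + C 1 := by rw [map_one]
      rw [this, natDegree_X_pow_add_C]
    rw [hq, e2] at e1
    omega
  have hqc : ∀ N, i ≤ N → q.coeff N = 0 := fun N hN =>
    coeff_eq_zero_of_natDegree_lt (lt_of_lt_of_le hqdeg hN)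
  -- coefficient equation
  have hq' : s + s * X ^ i = q + q * X ^ m := by linear_combination hq
  have hceq : ∀ N, s.coeff N + (if i ≤ N then s.coeff (N - i) else 0)
      = q.coeff N + (if m ≤ N then q.coeff (N - m) else 0) := by
    intro N
    have := congrArg (fun P : F[X] => P.coeff N) hq'
    simpa [coeff_add, coeff_mul_X_pow'] using this
  -- periodicity by i
  have hper : ∀ n, n < m → s.coeff ((n + i) % m) = s.coeff n := by
    intro n hn
    rcases lt_or_ge (n + i) m with h | h
    · rw [Nat.mod_eq_of_lt h]
      have e := hceq (n + i)
      rw [if_pos (Nat.le_add_left i n), if_neg (not_le.mpr h)] at e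
      rw [hqc (n + i) (Nat.le_add_left i n), Nat.add_sub_cancel] at e
      linear_combination e - h2 * s.coeff n
    · have hmod : (n + i) % m = n + i - m := by
        rw [Nat.mod_eq_sub_mod h, Nat.mod_eq_of_lt (by omega)]
      rw [hmod]
      have e1 := hceq (n + i)
      rw [if_pos (Nat.le_add_left i n), if_pos h, hsc (n + i) h,
        hqc (n + i) (Nat.le_add_left i n), Nat.add_sub_cancel] at e1
      have e2 := hceq (n + i - m)
      rw [if_neg (by omega : ¬ i ≤ n + i - m), if_neg (by omega : ¬ m ≤ n + i - m)] at e2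
      simp only [add_zero, zero_add] at e1 e2
      rw [e2, ← e1]
  have hper' : ∀ n, s.coeff ((n + i) % m) = s.coeff (n % m) := by
    intro n
    rw [← hper (n % m) (Nat.mod_lt _ hmpos), Nat.mod_add_mod]
  have hmult : ∀ b n, s.coeff ((n + b * i) % m) = s.coeff (n % m) := by
    intro b
    induction b with
    | zero => simp
    | succ b ih =>
      intro n
      have : n + (b + 1) * i = (n + b * i) + i := by ring
      rw [this, hper' (n + b * i), ih n]
  -- periodicity by g = gcd i m
  set g : ℕ := Nat.gcd i m with hgdef
  have hg0 : 0 < g := Nat.gcd_pos_of_pos_right _ hmpos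
  have hgi : g ∣ i := Nat.gcd_dvd_left _ _
  have hgm : g ∣ m := Nat.gcd_dvd_right _ _
  have hgltm : g < m := lt_of_le_of_lt (Nat.le_of_dvd (by omega) hgi) him
  obtain ⟨b, -, hb⟩ := Nat.exists_mul_mod_eq_gcd (k := m) (n := i) hgltm
  have hbim : i * b = (i * b / m) * m + g := by
    conv_lhs => rw [← Nat.div_add_mod (i * b) m]
    rw [hb]; ring
  have hperg : ∀ n, s.coeff ((n + g) % m) = s.coeff (n % m) := by
    intro n
    have := hmult b n
    rw [mul_comm b i, hbim] at this
    rw [← this]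
    congr 1
    rw [show n + ((i * b / m) * m + g) = (n + g) + (i * b / m) * m by ring,
      Nat.add_mul_mod_self_right]
  have hmultg : ∀ t n, s.coeff ((n + t * g) % m) = s.coeff (n % m) := by
    intro t
    induction t with
    | zero => simp
    | succ t ih =>
      intro n
      have : n + (t + 1) * g = (n + t * g) + g := by ring
      rw [this, hperg (n + t * g), ih n]
  have hred : ∀ n, s.coeff (n % m) = s.coeff (n % g) := by
    intro n
    have h1 := hmultg (n / g) (n % g)
    rw [Nat.mod_add_div' n g] at h1
    rw [h1, Nat.mod_eq_of_lt (lt_of_lt_of_le (Nat.mod_lt _ hg0) (Nat.le_of_dvd hmpos hgm))]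
  -- g divides τ
  have hgτ : g ∣ τ := by
    have hmfac : m = γ * p ^ (ν + 1) := by rw [hmdef, hτdef]; ring
    have hgm' : g ∣ γ * p ^ (ν + 1) := hmfac ▸ hgm
    obtain ⟨d₁, d₂, hd₁, hd₂, hgd⟩ := exists_dvd_and_dvd_of_dvd_mul hgm'
    obtain ⟨e, he, hd₂e⟩ := (Nat.dvd_prime_pow hp).mp hd₂
    have henu : e ≤ ν := by
      rcases Nat.lt_or_ge e (ν + 1) with h | h
      · omega
      · exfalso
        have hd₂g : d₂ ∣ g := ⟨d₁, by rw [hgd, mul_comm]⟩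
        have : p ^ (ν + 1) ∣ i := dvd_trans (dvd_trans (pow_dvd_pow p h) (hd₂e ▸ hd₂g)) hgi
        have := Nat.le_of_dvd (by omega) this
        omega
    rw [hgd, hd₂e, hτdef]
    exact mul_dvd_mul hd₁ (pow_dvd_pow p henu)
  have hgτ' : g ≤ τ := Nat.le_of_dvd hτpos hgτ
  -- coefficients at residues < g vanish
  have hpF : (p : F) = 1 := by
    obtain ⟨k, hk⟩ := hodd
    rw [hk]; push_cast; rw [h2]; ring
  have hcoeff_red : ∀ n, n < m → s.coeff n = s.coeff (n % g) := by
    intro n hn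
    rw [← Nat.mod_eq_of_lt hn, hred, Nat.mod_mod_of_dvd n hgm]
  have hzero : ∀ r, r < g → s.coeff r = 0 := by
    intro r hr
    have hsum := hpar r (lt_of_lt_of_le hr hgτ')
    have hterm : ∀ v ∈ Finset.range p, s.coeff (v * τ + r) = s.coeff r := by
      intro v hv
      rw [Finset.mem_range] at hv
      have hlt : v * τ + r < m := by
        have : v * τ + r < v * τ + τ := by omega
        calc v * τ + r < v * τ + τ := this
          _ = (v + 1) * τ := by ring
          _ ≤ p * τ := Nat.mul_le_mul_right _ (by omega)
      rw [hcoeff_red _ hlt]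
      obtain ⟨c, hc⟩ := hgτ
      rw [hc, show v * (g * c) + r = r + (v * c) * g by ring, Nat.add_mul_mod_self_right,
        Nat.mod_eq_of_lt hr]
    rw [Finset.sum_congr rfl hterm, Finset.sum_const, Finset.card_range, nsmul_eq_mul, hpF, one_mul] at hsum
    exact hsum
  -- conclude
  ext n
  simp only [coeff_zero]
  rcases lt_or_ge n m with hn | hn
  · rw [hcoeff_red n hn]
    exact hzero _ (Nat.mod_lt _ hg0)
  · exact hsc n hn
end

section
/- Let p be an odd prime, τ = γ p^ν with gcd(γ,p)=1, m = pτ, and F a field of characteristic 2. Write g(x)·h(x) = 1 + x^τ + ... + x^{(p-1)τ}. If (1 + x^{p^ν} + x^{2p^ν} + ... + x^{(p-1)p^ν}) does not divide g(x), then the element s(x) = g(x)(1 + x^{p^ν})(1 + x^{p^{ν+1}} + x^{2p^{ν+1}} + ... + x^{(γ-1)p^{ν+1}}) is a nonzero element of F[x]/(x^m + 1), is divisible by (1 + x^τ) g(x), and satisfies (1 + x^{p^{ν+1}}) s(x) = 0 in F[x]/(x^m + 1). -/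
open Polynomial

private lemma stmt7_pow_mod {R : Type*} [CommRing R] {z : R} {n : ℕ} (hz : z ^ n = 1) (a : ℕ) :
    z ^ a = z ^ (a % n) := by
  conv_lhs => rw [← Nat.mod_add_div a n, pow_add, pow_mul, hz, one_pow, mul_one]

private lemma stmt7_keydvd (F : Type*) [Field F] [CharP F 2] (q p γ : ℕ) (hγ : 0 < γ)
    (hcop : Nat.Coprime γ p) :
    ((X : Polynomial F) ^ (γ * q) + 1) ∣
      (1 + X ^ q) * ∑ i ∈ Finset.range γ, X ^ (i * (q * p)) := by
  rw [← Ideal.Quotient.eq_zero_iff_dvd]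
  set I := Ideal.span {(X : Polynomial F) ^ (γ * q) + 1}
  set φ := Ideal.Quotient.mk I with hφ
  have h0 : φ ((X : Polynomial F) ^ (γ * q) + 1) = 0 := by
    rw [hφ, Ideal.Quotient.eq_zero_iff_mem]
    exact Ideal.subset_span rfl
  have h2 : (1 : Polynomial F ⧸ I) + 1 = 0 := by
    have : ((1 : Polynomial F) + 1) = 0 := CharTwo.add_self_eq_zero 1
    calc (1 : Polynomial F ⧸ I) + 1 = φ (1 + 1) := by simp
    _ = 0 := by rw [this, map_zero]
  simp only [map_mul, map_add, map_one, map_pow, map_sum]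
  have h1 : (φ X) ^ (γ * q) = 1 := by
    simp only [map_add, map_pow, map_one] at h0
    linear_combination h0 - h2
  have hz : ((φ X) ^ q) ^ γ = 1 := by rw [← pow_mul, mul_comm]; exact h1
  have hterm : ∀ i, (φ X) ^ (i * (q * p)) = (((φ X) ^ q) ^ p) ^ i := by
    intro i; rw [← pow_mul, ← pow_mul]; congr 1; ring
  simp only [hterm]
  set z := (φ X) ^ q with hzdef
  set w := z ^ p with hwdef
  have hw : w ^ γ = 1 := by rw [hwdef, ← pow_mul, mul_comm, pow_mul, hz, one_pow]
  have hgeom : (∑ i ∈ Finset.range γ, w ^ i) * (w - 1) = 0 := by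
    rw [geom_sum_mul, hw, sub_self]
  rcases eq_or_lt_of_le (show 1 ≤ γ from hγ) with hone | hlt
  · have hγ1 : γ = 1 := hone.symm
    subst hγ1
    have hz1 : z = 1 := by rw [← pow_one z, hz]
    rw [hz1]
    simp only [Finset.range_one, Finset.sum_singleton, pow_zero, mul_one]
    exact h2
  · obtain ⟨a, -, ha⟩ := Nat.exists_mul_mod_eq_one_of_coprime hcop.symm hlt
    have hwa : w ^ a = z := by
      rw [hwdef, ← pow_mul, stmt7_pow_mod hz (p * a), ha, pow_one]
    have hdw := sub_dvd_pow_sub_pow w 1 a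
    rw [one_pow, hwa] at hdw
    obtain ⟨v, hv⟩ := hdw
    linear_combination (∑ i ∈ Finset.range γ, w ^ i) * hv + v * hgeom +
      (∑ i ∈ Finset.range γ, w ^ i) * h2

/-- Theorem 1(ii): non-(n,k)-recoverability witness. Let `p` be an odd prime,
`τ = γ p^ν` with `gcd(γ,p)=1`, `m = pτ`, `F` of char 2, and `g h` with
`g·h = ∑_{i<p} x^{iτ}`. If `∑_{i<p} x^{i p^ν}` does not divide `g`, then
`s = g (1 + x^{p^ν}) (∑_{i<γ} x^{i p^{ν+1}})` is nonzero in `F[x]/(x^m+1)`,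
is divisible by `(1 + x^τ) g` modulo `x^m + 1`, and satisfies
`(1 + x^{p^{ν+1}}) s ≡ 0 mod (x^m + 1)`. -/
theorem stmt7 (F : Type*) [Field F] [CharP F 2] (p ν γ : ℕ) (hp : Nat.Prime p)
    (hodd : Odd p) (hγ : 0 < γ) (hcop : Nat.Coprime γ p) (g h : Polynomial F)
    (hgh : g * h = ∑ i ∈ Finset.range p, (X : Polynomial F) ^ (i * (γ * p ^ ν)))
    (hnd : ¬ (∑ i ∈ Finset.range p, (X : Polynomial F) ^ (i * p ^ ν)) ∣ g) :
    ¬ ((X : Polynomial F) ^ (p * (γ * p ^ ν)) + 1) ∣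
        (g * (1 + X ^ (p ^ ν)) * ∑ i ∈ Finset.range γ, X ^ (i * p ^ (ν + 1))) ∧
    (∃ u : Polynomial F, ((X : Polynomial F) ^ (p * (γ * p ^ ν)) + 1) ∣
        (g * (1 + X ^ (p ^ ν)) * (∑ i ∈ Finset.range γ, X ^ (i * p ^ (ν + 1))) -
          (1 + X ^ (γ * p ^ ν)) * g * u)) ∧
    ((X : Polynomial F) ^ (p * (γ * p ^ ν)) + 1) ∣
      (1 + X ^ (p ^ (ν + 1))) *
        (g * (1 + X ^ (p ^ ν)) * ∑ i ∈ Finset.range γ, X ^ (i * p ^ (ν + 1))) := by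
  simp only [pow_succ]
  set q := p ^ ν with hq
  set S : Polynomial F := ∑ i ∈ Finset.range γ, X ^ (i * (q * p)) with hS
  set P : Polynomial F := ∑ i ∈ Finset.range p, X ^ (i * q) with hP
  have hq0 : 0 < q := pow_pos hp.pos ν
  have hm0 : 0 < p * (γ * q) := Nat.mul_pos hp.pos (Nat.mul_pos hγ hq0)
  have h2 : ((1 : Polynomial F) + 1) = 0 := CharTwo.add_self_eq_zero 1
  -- geometric identities
  have idA : S * ((X : Polynomial F) ^ (q * p) - 1) = X ^ (p * (γ * q)) - 1 := by
    have hre : S = ∑ i ∈ Finset.range γ, ((X : Polynomial F) ^ (q * p)) ^ i := by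
      rw [hS]; exact Finset.sum_congr rfl fun i _ => by rw [← pow_mul, mul_comm]
    rw [hre, geom_sum_mul, ← pow_mul, show (q * p) * γ = p * (γ * q) from by ring]
  have idB : P * ((X : Polynomial F) ^ q - 1) = X ^ (q * p) - 1 := by
    have hre : P = ∑ i ∈ Finset.range p, ((X : Polynomial F) ^ q) ^ i := by
      rw [hP]; exact Finset.sum_congr rfl fun i _ => by rw [← pow_mul, mul_comm]
    rw [hre, geom_sum_mul, ← pow_mul]
  have hXm : (X : Polynomial F) ^ (p * (γ * q)) - 1 ≠ 0 := by
    have := Polynomial.X_pow_sub_C_ne_zero (R := F) hm0 1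
    rwa [map_one] at this
  have hS0 : S ≠ 0 := by
    intro hs; rw [hs, zero_mul] at idA; exact hXm idA.symm
  have hZq : (X : Polynomial F) ^ q - 1 ≠ 0 := by
    have := Polynomial.X_pow_sub_C_ne_zero (R := F) hq0 1
    rwa [map_one] at this
  have hsub : ∀ A : Polynomial F, A + 1 = A - 1 := by
    intro A; rw [CharTwo.sub_eq_add]
  have hzz : (1 : Polynomial F) + X ^ q = X ^ q - 1 := by
    rw [CharTwo.sub_eq_add, add_comm]
  refine ⟨?_, ?_, ?_⟩
  · intro hdvd
    rw [hsub, hzz, mul_assoc] at hdvd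
    have hfact : (X : Polynomial F) ^ (p * (γ * q)) - 1 = P * ((X ^ q - 1) * S) := by
      linear_combination -idA - S * idB
    rw [hfact] at hdvd
    have hc : ((X : Polynomial F) ^ q - 1) * S ≠ 0 := mul_ne_zero hZq hS0
    exact hnd ((mul_dvd_mul_iff_right hc).mp hdvd)
  · obtain ⟨w, hw⟩ := stmt7_keydvd F q p γ hγ hcop
    refine ⟨w, ?_⟩
    have hzero : g * (1 + X ^ q) * S - (1 + X ^ (γ * q)) * g * w = 0 := by
      linear_combination g * hw
    rw [hzero]
    exact dvd_zero _
  · refine ⟨g * (1 + X ^ q), ?_⟩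
    linear_combination (g * (1 + (X : Polynomial F) ^ q)) * idA +
      (g * (1 + X ^ q) * S - g * (1 + X ^ q)) * h2
end

section
/- Let p be an odd prime, j ≥ 1, ν ≥ 0, ℓ odd with gcd(ℓ,p)=1, τ = 2^j ℓ p^ν, m = pτ, and F a field of characteristic 2. Set g(x) = (1 + x^{p^ν} + x^{2p^ν} + ... + x^{(p-1)p^ν})^{2^j − 1} and s(x) = ((1 + x^m)/(1 + x^{p^{ν+1}}))·(1 + x^{p^ν}) ∈ F[x]. Then: (a) deg s = (2^j ℓ − 1) p^{ν+1} + p^ν < m, so s ≠ 0 in F[x]/(x^m+1); (b) (1 + x^τ) g(x) divides s(x) in F[x]; and (c) (1 + x^{p^{ν+1}}) s(x) ≡ 0 mod (x^m + 1). -/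
open Polynomial

open Finset


lemma geomKey {R : Type*} [CommRing R] [CharP R 2] (a n : ℕ) :
    (∑ i ∈ range n, (X : R[X]) ^ (i * a)) * (1 + X ^ a) = 1 + X ^ (n * a) := by
  have h := geom_sum_mul ((X : R[X]) ^ a) n
  rw [CharTwo.sub_eq_add, CharTwo.sub_eq_add] at h
  have e : ∀ i : ℕ, ((X : R[X]) ^ a) ^ i = X ^ (i * a) := fun i => by
    rw [← pow_mul, mul_comm]
  simp only [e] at h
  rw [add_comm (1 : R[X]) (X ^ a), add_comm (1 : R[X]) (X ^ (n * a))]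
  exact h

lemma permSum {M : Type*} [AddCommMonoid M] (ℓ p : ℕ) (hℓ : 0 < ℓ)
    (hcop : Nat.Coprime p ℓ) (f : ℕ → M) :
    ∑ i ∈ range ℓ, f ((i * p) % ℓ) = ∑ i ∈ range ℓ, f i := by
  rcases eq_or_lt_of_le (show 1 ≤ ℓ from hℓ) with h1 | h1
  · simp [← h1]
  obtain ⟨p', -, hp'⟩ := Nat.exists_mul_mod_eq_one_of_coprime hcop h1
  refine Finset.sum_nbij' (fun a => a * p % ℓ) (fun b => b * p' % ℓ) ?_ ?_ ?_ ?_ ?_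
  · intro a _; exact mem_range.mpr (Nat.mod_lt _ hℓ)
  · intro a _; exact mem_range.mpr (Nat.mod_lt _ hℓ)
  · intro a ha
    show a * p % ℓ * p' % ℓ = a
    rw [Nat.mod_mul_mod, mul_assoc, Nat.mul_mod, hp', mul_one,
      Nat.mod_mod_of_dvd _ dvd_rfl, Nat.mod_eq_of_lt (mem_range.mp ha)]
  · intro b hb
    show b * p' % ℓ * p % ℓ = b
    rw [Nat.mod_mul_mod, mul_assoc, mul_comm p' p, Nat.mul_mod, hp', mul_one,
      Nat.mod_mod_of_dvd _ dvd_rfl, Nat.mod_eq_of_lt (mem_range.mp hb)]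
  · intro a _; rfl

lemma dvdKey {F : Type*} [Field F] [CharP F 2] (q ℓ p : ℕ) (hℓ : 0 < ℓ)
    (hcop : Nat.Coprime p ℓ) :
    (1 + (X : F[X]) ^ (ℓ * q)) ∣ (1 + X ^ q) * (∑ i ∈ range ℓ, X ^ (i * (q * p))) := by
  set A : F[X] := ∑ i ∈ range ℓ, X ^ (i * (q * p)) with hAdef
  set B : F[X] := ∑ i ∈ range ℓ, X ^ (i * q) with hBdef
  have hAB : (1 + (X : F[X]) ^ (ℓ * q)) ∣ A + B := by
    have hB2 : B = ∑ i ∈ range ℓ, (X : F[X]) ^ ((i * p % ℓ) * q) :=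
      (permSum ℓ p hℓ hcop (fun k => (X : F[X]) ^ (k * q))).symm
    rw [hB2, hAdef, ← Finset.sum_add_distrib]
    apply Finset.dvd_sum
    intro i _
    have hip : i * p = ℓ * (i * p / ℓ) + i * p % ℓ := (Nat.div_add_mod _ _).symm
    have e1 : i * (q * p) = (i * p % ℓ) * q + (ℓ * q) * (i * p / ℓ) := by
      rw [show i * (q * p) = (i * p) * q by ring]
      nth_rewrite 1 [hip]; ring
    rw [e1, pow_add]
    have e2 : (X : F[X]) ^ ((i * p % ℓ) * q) * (X ^ (ℓ * q * (i * p / ℓ)))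
        + X ^ ((i * p % ℓ) * q)
        = X ^ ((i * p % ℓ) * q) * (X ^ (ℓ * q * (i * p / ℓ)) + 1) := by ring
    rw [e2]
    have hd : (X : F[X]) ^ (ℓ * q) + 1 ∣ X ^ (ℓ * q * (i * p / ℓ)) + 1 := by
      have := sub_dvd_pow_sub_pow ((X : F[X]) ^ (ℓ * q)) 1 (i * p / ℓ)
      rw [← pow_mul] at this
      rwa [CharTwo.sub_eq_add, CharTwo.sub_eq_add, one_pow] at this
    rw [add_comm (1 : F[X])]
    exact Dvd.dvd.mul_left hd _
  obtain ⟨E, hE⟩ := hAB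
  have hBe : B * (1 + X ^ q) = 1 + X ^ (ℓ * q) := geomKey q ℓ
  refine ⟨(1 + X ^ q) * E + 1, ?_⟩
  have hA : A = (A + B) + B := by rw [add_assoc, CharTwo.add_self_eq_zero, add_zero]
  calc (1 + X ^ q) * A = (1 + X ^ q) * ((A + B) + B) := by rw [← hA]
    _ = (1 + X ^ q) * (A + B) + B * (1 + X ^ q) := by ring
    _ = (1 + X ^ q) * ((1 + X ^ (ℓ * q)) * E) + (1 + X ^ (ℓ * q)) := by rw [hE, hBe]
    _ = (1 + X ^ (ℓ * q)) * ((1 + X ^ q) * E + 1) := by ring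

lemma one_add_X_pow_ne {F : Type*} [Field F] (n : ℕ) (hn : 0 < n) :
    (1 + (X : F[X]) ^ n) ≠ 0 := by
  intro h
  have := congrArg (eval 0) h
  simp [zero_pow hn.ne'] at this

lemma nd_one_add {F : Type*} [Field F] (n : ℕ) : ((1 : F[X]) + X ^ n).natDegree = n := by
  have e : (X : F[X]) ^ n + 1 = X ^ n + C 1 := by rw [C_1]
  rw [add_comm, e, natDegree_X_pow_add_C]

/-- Theorem 2(ii) key construction. Let `p` be an odd prime, `j ≥ 1`, `ℓ` odd with
`gcd(ℓ,p)=1`, `τ = 2^j ℓ p^ν`, `m = pτ`, `F` of char 2,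
`g = (∑_{i<p} x^{i p^ν})^{2^j - 1}` and
`s = (∑_{i < 2^j ℓ} x^{i p^{ν+1}})(1 + x^{p^ν})` (i.e. `((1+x^m)/(1+x^{p^{ν+1}}))(1+x^{p^ν})`).
Then (a) `deg s = (2^j ℓ - 1) p^{ν+1} + p^ν < m` and `s ≠ 0` in `F[x]/(x^m+1)`;
(b) `(1 + x^τ) g` divides `s` in `F[x]`; (c) `(1 + x^{p^{ν+1}}) s ≡ 0 mod (x^m + 1)`. -/
theorem stmt8 (F : Type*) [Field F] [CharP F 2] (p ν j ℓ : ℕ) (hp : Nat.Prime p)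
    (hodd : Odd p) (hj : 1 ≤ j) (hℓodd : Odd ℓ) (hcop : Nat.Coprime ℓ p) :
    ((∑ i ∈ Finset.range (2 ^ j * ℓ), (X : Polynomial F) ^ (i * p ^ (ν + 1))) *
          (1 + X ^ (p ^ ν))).natDegree = (2 ^ j * ℓ - 1) * p ^ (ν + 1) + p ^ ν ∧
    (2 ^ j * ℓ - 1) * p ^ (ν + 1) + p ^ ν < p * (2 ^ j * ℓ * p ^ ν) ∧
    ¬ ((X : Polynomial F) ^ (p * (2 ^ j * ℓ * p ^ ν)) + 1) ∣
        ((∑ i ∈ Finset.range (2 ^ j * ℓ), (X : Polynomial F) ^ (i * p ^ (ν + 1))) *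
          (1 + X ^ (p ^ ν))) ∧
    ((1 + (X : Polynomial F) ^ (2 ^ j * ℓ * p ^ ν)) *
        (∑ i ∈ Finset.range p, (X : Polynomial F) ^ (i * p ^ ν)) ^ (2 ^ j - 1)) ∣
      ((∑ i ∈ Finset.range (2 ^ j * ℓ), (X : Polynomial F) ^ (i * p ^ (ν + 1))) *
        (1 + X ^ (p ^ ν))) ∧
    ((X : Polynomial F) ^ (p * (2 ^ j * ℓ * p ^ ν)) + 1) ∣
      (1 + X ^ (p ^ (ν + 1))) *
        ((∑ i ∈ Finset.range (2 ^ j * ℓ), (X : Polynomial F) ^ (i * p ^ (ν + 1))) *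
          (1 + X ^ (p ^ ν))) := by
  haveI : Fact (Nat.Prime 2) := ⟨Nat.prime_two⟩
  set q := p ^ ν with hqdef
  set Q := p ^ (ν + 1) with hQdef
  set N := 2 ^ j * ℓ with hNdef
  set S : F[X] := ∑ i ∈ Finset.range N, X ^ (i * Q) with hSdef
  set h : F[X] := ∑ i ∈ Finset.range p, X ^ (i * q) with hhdef
  set A : F[X] := ∑ i ∈ Finset.range ℓ, X ^ (i * (q * p)) with hAdef
  have hℓpos : 0 < ℓ := hℓodd.pos
  have hppos : 0 < p := hp.pos
  have hqpos : 0 < q := pow_pos hppos ν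
  have hQpos : 0 < Q := pow_pos hppos (ν + 1)
  have hNpos : 0 < N := Nat.mul_pos (pow_pos (by norm_num : (0:ℕ) < 2) j) hℓpos
  have hN1 : N - 1 + 1 = N := Nat.succ_pred_eq_of_pos hNpos
  have h2j : 2 ^ j - 1 + 1 = 2 ^ j := Nat.succ_pred_eq_of_pos (pow_pos (by norm_num : (0:ℕ) < 2) j)
  have eqp : q * p = Q := (pow_succ p ν).symm
  have epq : p * q = Q := by rw [mul_comm]; exact eqp
  have em : p * (N * q) = N * Q := by rw [← eqp]; ring
  have E1 : S * (1 + X ^ Q) = 1 + X ^ (N * Q) := geomKey Q N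
  have Eh : h * (1 + X ^ q) = 1 + X ^ Q := by rw [hhdef, geomKey q p, epq]
  have EA : A * (1 + X ^ Q) = 1 + X ^ (ℓ * (q * p)) := by
    rw [hAdef, ← eqp]; exact geomKey (q * p) ℓ
  have hQne : (1 + (X : F[X]) ^ Q) ≠ 0 := one_add_X_pow_ne Q hQpos
  have hqne : (1 + (X : F[X]) ^ q) ≠ 0 := one_add_X_pow_ne q hqpos
  have hmne : (1 + (X : F[X]) ^ (N * Q)) ≠ 0 := one_add_X_pow_ne _ (Nat.mul_pos hNpos hQpos)
  have hSne : S ≠ 0 := by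
    intro h0
    exact hmne (by rw [← E1, h0, zero_mul])
  have frob : ∀ n : ℕ, ((1 : F[X]) + X ^ n) ^ (2 ^ j) = 1 + X ^ (n * 2 ^ j) := by
    intro n
    rw [add_pow_char_pow, one_pow, ← pow_mul]
  -- key factorization S = (1+X^q)^(2^j-1) * h^(2^j-1) * A^(2^j)
  have key : ((1 + X ^ q) ^ (2 ^ j - 1) * h ^ (2 ^ j - 1) * A ^ (2 ^ j)) * (1 + X ^ Q)
      = 1 + (X : F[X]) ^ (N * Q) := by
    calc ((1 + X ^ q) ^ (2 ^ j - 1) * h ^ (2 ^ j - 1) * A ^ (2 ^ j)) * (1 + X ^ Q)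
        = (h * (1 + X ^ q)) ^ (2 ^ j - 1) * (A ^ (2 ^ j) * (1 + X ^ Q)) := by
          rw [mul_pow]; ring
      _ = (1 + X ^ Q) ^ (2 ^ j - 1) * (1 + X ^ Q) * A ^ (2 ^ j) := by rw [Eh]; ring
      _ = (1 + X ^ Q) ^ (2 ^ j) * A ^ (2 ^ j) := by rw [← pow_succ, h2j]
      _ = (A * (1 + X ^ Q)) ^ (2 ^ j) := by rw [mul_pow]; ring
      _ = (1 + X ^ (ℓ * (q * p))) ^ (2 ^ j) := by rw [EA]
      _ = 1 + (X : F[X]) ^ (ℓ * (q * p) * 2 ^ j) := frob _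
      _ = 1 + (X : F[X]) ^ (N * Q) := by rw [← eqp, hNdef]; ring_nf
  have hS : S = (1 + X ^ q) ^ (2 ^ j - 1) * h ^ (2 ^ j - 1) * A ^ (2 ^ j) :=
    mul_right_cancel₀ hQne (E1.trans key.symm)
  -- degrees
  have ndS : S.natDegree = (N - 1) * Q := by
    have h1 := congrArg natDegree E1
    rw [natDegree_mul hSne hQne, nd_one_add, nd_one_add] at h1
    rw [Nat.sub_mul, one_mul]
    exact Nat.eq_sub_of_add_eq h1
  have nds : (S * (1 + X ^ q)).natDegree = (N - 1) * Q + q := by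
    rw [natDegree_mul hSne hqne, ndS, nd_one_add]
  have hqQ : q < Q := Nat.pow_lt_pow_succ hp.one_lt
  have hlt : (N - 1) * Q + q < p * (N * q) := by
    calc (N - 1) * Q + q < (N - 1) * Q + Q := Nat.add_lt_add_left hqQ _
      _ = (N - 1 + 1) * Q := by ring
      _ = N * Q := by rw [hN1]
      _ = p * (N * q) := em.symm
  refine ⟨nds, hlt, ?_, ?_, ?_⟩
  · -- not divisible
    intro hdvd
    have hsne : S * (1 + X ^ q) ≠ 0 := mul_ne_zero hSne hqne
    have hle := natDegree_le_of_dvd hdvd hsne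
    have ndm : ((X : F[X]) ^ (p * (N * q)) + 1).natDegree = p * (N * q) := by
      rw [add_comm]; exact nd_one_add _
    rw [ndm, nds] at hle
    exact absurd hlt (not_lt.mpr hle)
  · -- divisibility by (1+X^τ) g
    obtain ⟨W, hW⟩ := dvdKey (F := F) q ℓ p hℓpos hcop.symm
    have hτ : (1 : F[X]) + X ^ (N * q) = (1 + X ^ (ℓ * q)) ^ (2 ^ j) := by
      rw [frob (ℓ * q)]
      congr 2
      rw [hNdef]; ring
    refine ⟨W ^ (2 ^ j), ?_⟩
    rw [hS, hτ]
    calc (1 + X ^ q) ^ (2 ^ j - 1) * h ^ (2 ^ j - 1) * A ^ (2 ^ j) * (1 + X ^ q)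
        = h ^ (2 ^ j - 1) * ((1 + X ^ q) ^ (2 ^ j - 1) * (1 + X ^ q) * A ^ (2 ^ j)) := by
          ring
      _ = h ^ (2 ^ j - 1) * ((1 + X ^ q) ^ (2 ^ j) * A ^ (2 ^ j)) := by
          rw [← pow_succ, h2j]
      _ = h ^ (2 ^ j - 1) * ((1 + X ^ q) * A) ^ (2 ^ j) := by rw [mul_pow]
      _ = h ^ (2 ^ j - 1) * ((1 + X ^ (ℓ * q)) * W) ^ (2 ^ j) := by rw [hW]
      _ = (1 + X ^ (ℓ * q)) ^ (2 ^ j) * h ^ (2 ^ j - 1) * W ^ (2 ^ j) := by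
          rw [mul_pow]; ring
  · -- congruence (c)
    refine ⟨1 + X ^ q, ?_⟩
    calc (1 + X ^ Q) * (S * (1 + X ^ q))
        = (S * (1 + X ^ Q)) * (1 + X ^ q) := by ring
      _ = (1 + X ^ (N * Q)) * (1 + X ^ q) := by rw [E1]
      _ = ((X : F[X]) ^ (p * (N * q)) + 1) * (1 + X ^ q) := by rw [em, add_comm ((X:F[X]) ^ (N*Q))]
end

section
/- Let p be an odd prime, m = pτ, and F a field of characteristic 2. Suppose s_{j,c} ∈ F for 0 ≤ j ≤ m−1, 0 ≤ c ≤ m−1 satisfy ∑_{c=0}^{m-1} s_{j,c} = 0 for every j (even parity along rows). Fix i with gcd(i, m) = 1 and let w = (m − i)^{-1} mod m. Define, for each ℓ, the 'slope-i line polynomial' s̄_ℓ(x) = ∑_{c=0}^{m-1} s_{ℓ − ic mod m, c} x^c ∈ F[x]/(x^m+1). Then ∑_{ℓ=0}^{m-1} x^{ℓ w} s̄_ℓ(x) = 0 in F[x]/(x^m+1). -/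
open Polynomial

/-- Key computation in Theorem 4: let `m = pτ` with `p` an odd prime, `F` of char 2,
and suppose every row of the array `(s_{j,c})` sums to zero. Fix `i` coprime to `m`
and let `w = (m - i)⁻¹ mod m`. Representing the line of slope `i` through row `ℓ` by
`s̄_ℓ(x) = ∑_c s_{ℓ - ic, c} x^c ∈ F[x]/(x^m+1)`, we have
`∑_ℓ x^{ℓw} s̄_ℓ(x) = 0` in `F[x]/(x^m+1)`. -/
theorem stmt17 (F : Type*) [Field F] [CharP F 2] (p τ m : ℕ) (hp : Nat.Prime p)
    (hodd : Odd p) (hτ : 0 < τ) (hm : m = p * τ) [NeZero m]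
    (s : ZMod m → ZMod m → F)
    (hrow : ∀ j : ZMod m, ∑ c : ZMod m, s j c = 0)
    (i : ℕ) (hi : Nat.Coprime i m) :
    ∑ ℓ : ZMod m,
      (Ideal.Quotient.mk (Ideal.span {(X : Polynomial F) ^ m + 1})
          (X ^ ((ℓ * (-(i : ZMod m))⁻¹).val))) *
        (Ideal.Quotient.mk (Ideal.span {(X : Polynomial F) ^ m + 1})
          (∑ c : ZMod m, Polynomial.C (s (ℓ - (i : ZMod m) * c) c) * X ^ c.val)) = 0 := by
  set I := Ideal.span {(X : Polynomial F) ^ m + 1} with hIdef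
  set π := Ideal.Quotient.mk I with hπdef
  set y := π X with hydef
  set w : ZMod m := (-(i : ZMod m))⁻¹ with hwdef
  have hchar : (2 : Polynomial F ⧸ I) = 0 := by
    have h2 : ((2 : ℕ) : Polynomial F ⧸ I) = 0 := by
      rw [← map_natCast π 2, CharP.cast_eq_zero (Polynomial F) 2, map_zero]
    exact_mod_cast h2
  have hym : y ^ m = 1 := by
    have h0 : π ((X : Polynomial F) ^ m + 1) = 0 :=
      Ideal.Quotient.eq_zero_iff_mem.mpr (Ideal.subset_span rfl)
    rw [map_add, map_pow, map_one] at h0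
    linear_combination h0 - hchar
  have hmul : ∀ a b : ZMod m, y ^ a.val * y ^ b.val = y ^ (a + b).val := by
    intro a b
    rw [← pow_add]
    have h : a.val + b.val = m * ((a.val + b.val) / m) + (a + b).val := by
      rw [ZMod.val_add]; exact (Nat.div_add_mod _ m).symm
    rw [h, pow_add, pow_mul, hym, one_pow, one_mul]
  have hu : IsUnit (-(i : ZMod m)) := by
    have : IsUnit (i : ZMod m) := (ZMod.isUnit_iff_coprime i m).mpr hi
    exact this.neg
  have hw1 : (-(i : ZMod m)) * w = 1 := ZMod.mul_inv_of_unit _ hu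
  have hw2 : (i : ZMod m) * w = -1 := by linear_combination -hw1
  calc
    ∑ ℓ : ZMod m, π (X ^ ((ℓ * w).val)) *
        π (∑ c : ZMod m, Polynomial.C (s (ℓ - (i : ZMod m) * c) c) * X ^ c.val)
      = ∑ ℓ : ZMod m, ∑ c : ZMod m,
          y ^ ((ℓ * w).val) * (π (Polynomial.C (s (ℓ - (i : ZMod m) * c) c)) * y ^ c.val) := by
        refine Finset.sum_congr rfl fun ℓ _ => ?_
        rw [map_sum, Finset.mul_sum]
        refine Finset.sum_congr rfl fun c _ => ?_
        rw [map_mul, map_pow, map_pow, hydef]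
    _ = ∑ c : ZMod m, ∑ ℓ : ZMod m,
          y ^ ((ℓ * w).val) * (π (Polynomial.C (s (ℓ - (i : ZMod m) * c) c)) * y ^ c.val) :=
        Finset.sum_comm
    _ = ∑ c : ZMod m, ∑ j : ZMod m, π (Polynomial.C (s j c)) * y ^ ((j * w).val) := by
        refine Finset.sum_congr rfl fun c _ => ?_
        refine Fintype.sum_equiv (Equiv.subRight ((i : ZMod m) * c)) _ _ fun j => ?_
        have hidx : j * w + c = (j - (i : ZMod m) * c) * w := by
          linear_combination c * hw2
        simp only [Equiv.subRight_apply]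
        rw [mul_comm (π (Polynomial.C (s (j - (i : ZMod m) * c) c))) (y ^ c.val),
          ← mul_assoc, hmul, hidx]
        ring
    _ = ∑ j : ZMod m, π (Polynomial.C (∑ c : ZMod m, s j c)) * y ^ ((j * w).val) := by
        rw [Finset.sum_comm]
        refine Finset.sum_congr rfl fun j _ => ?_
        rw [map_sum, map_sum, Finset.sum_mul]
    _ = 0 := by
        simp [hrow]
end
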